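/- Let m be a finite Eulerian multidigraph on V whose underlying undirected multigraph is connected, with at least two vertices, and suppose m is not strongly 2-edge-connected. Then there is a nonempty proper subset A of V such that exactly one arc goes from A to V∖A and exactly one arc goes from V∖A to A. -/

import Mathlib

/-- A multidigraph is *Eulerian* if every vertex has in-degree equal to out-degree. -/
def IsEulerian {V : Type*} [Fintype V] (m : V → V → ℕ) : Prop :=
  ∀ v : V, ∑ u, m u v = ∑ u, m v u

/-- `p` is the arc-multiplicity function of a directed path from `s` to `t`:
there is a sequence of pairwise distinct vertices `s = w 0, …, w k = t` such that
each arc `w i → w (i+1)` has multiplicity `1` and all other multiplicities are `0`. -/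
def IsPath {V : Type*} (p : V → V → ℕ) (s t : V) : Prop :=
  ∃ (k : ℕ) (w : Fin (k + 1) → V), Function.Injective w ∧
    w 0 = s ∧ w (Fin.last k) = t ∧
    (∀ i : Fin k, p (w i.castSucc) (w i.succ) = 1) ∧
    (∀ u v : V, (∀ i : Fin k, ¬(u = w i.castSucc ∧ v = w i.succ)) → p u v = 0)

/-- A multidigraph `m` is *strongly 2-edge-connected* if for any two pairs of
vertices `u₁, u₂` and `v₁, v₂` there are directed paths `p₁` starting at `u₁` and
`p₂` starting at `u₂`, one ending at `v₁` and the other at `v₂`, which are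
arc-disjoint in the sense that the sum of their arc-multiplicity functions is a
sub-multidigraph of `m`. -/
def Strongly2EdgeConnected {V : Type*} (m : V → V → ℕ) : Prop :=
  ∀ u₁ u₂ v₁ v₂ : V, ∃ p₁ p₂ : V → V → ℕ,
    ((IsPath p₁ u₁ v₁ ∧ IsPath p₂ u₂ v₂) ∨ (IsPath p₁ u₁ v₂ ∧ IsPath p₂ u₂ v₁)) ∧
    ∀ u v, p₁ u v + p₂ u v ≤ m u v

/-- The underlying undirected multigraph of `m` is connected: any two vertices are
joined by a sequence of vertices in which consecutive vertices are joined by an arc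
of `m` in some direction. -/
def UnderlyingConnected {V : Type*} (m : V → V → ℕ) : Prop :=
  ∀ u v : V, Relation.ReflTransGen (fun a b => 1 ≤ m a b ∨ 1 ≤ m b a) u v

/-!
Augmenting paths, as in the proof of Menger's theorem, in the language of integer flows. As `m`
is Eulerian, every cut is crossed equally often in both directions, so connectivity puts at least
one arc across every nonempty proper cut, in each direction. In particular there is a unit flow `F`
from `u₁` to `v₁` within the capacities `m`. If the residual graph of `F` has a path from `u₂` to
`v₂`, augmenting along it gives a flow of value two, which splits into two arc-disjoint paths
pairing `u₁, u₂` with `v₁, v₂`. Otherwise the set `A` of vertices residually reachable from `u₂`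
has all arcs out of `A` saturated and no flow entering `A`, so the number of arcs leaving `A` is
the net outflow of `F` from `A`, which is at most `1`.
-/

open Finset

theorem Fin.sum_castSucc_sub_succ {β : Type*} [AddCommGroup β] {k : ℕ} (f : Fin (k + 1) → β) :
    ∑ i : Fin k, (f i.castSucc - f i.succ) = f 0 - f (Fin.last k) := by
  induction k with
  | zero => simp
  | succ k ih =>
    rw [Fin.sum_univ_castSucc]
    simp only [Fin.succ_castSucc]
    rw [ih (fun i => f i.castSucc)]
    simp

theorem single_single_apply {V β : Type*} [DecidableEq V] [Zero β] (a b u v : V) (c : β) :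
    (Pi.single a (Pi.single b c) : V → V → β) u v = if u = a ∧ v = b then c else 0 := by
  by_cases hu : u = a
  · subst hu
    simp [Pi.single_apply]
  · simp [hu]

section NetOut

variable {V β : Type*} [Fintype V] [AddCommGroup β]

def netOut : (V → V → β) →+ V → β where
  toFun F x := ∑ y, F x y - ∑ y, F y x
  map_zero' := by ext; simp
  map_add' F G := by ext x; simp only [Pi.add_apply, sum_add_distrib]; abel

theorem netOut_apply (F : V → V → β) (x : V) : netOut F x = ∑ y, F x y - ∑ y, F y x := rfl

variable [DecidableEq V]

theorem sum_netOut (F : V → V → β) (A : Finset V) :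
    ∑ x ∈ A, netOut F x = ∑ a ∈ A, ∑ b ∈ Aᶜ, F a b - ∑ b ∈ Aᶜ, ∑ a ∈ A, F b a := by
  simp only [netOut_apply, sum_sub_distrib, ← sum_add_sum_compl A, sum_add_distrib]
  rw [sum_comm (s := A) (t := Aᶜ) (f := fun x y => F y x),
    sum_comm (s := A) (t := A) (f := fun x y => F y x)]
  abel

theorem netOut_single_single (a b : V) (c : β) :
    netOut (Pi.single a (Pi.single b c)) = Pi.single a c - Pi.single b c := by
  ext x
  simp [netOut_apply, single_single_apply, ite_and, Pi.single_apply]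

end NetOut

namespace IsEulerian

variable {V : Type*} [Fintype V] {m : V → V → ℕ}

theorem netOut_eq_zero (hm : IsEulerian m) : netOut (fun u v => (m u v : ℤ)) = 0 := by
  ext x
  simp [netOut_apply, ← Nat.cast_sum, hm x]

variable [DecidableEq V]

theorem sum_cut_eq (hm : IsEulerian m) (A : Finset V) :
    ∑ a ∈ A, ∑ b ∈ Aᶜ, m a b = ∑ b ∈ Aᶜ, ∑ a ∈ A, m b a := by
  have h := sum_netOut (fun u v => (m u v : ℤ)) A
  simp only [hm.netOut_eq_zero, Pi.zero_apply, sum_const_zero] at h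
  exact_mod_cast (sub_eq_zero.mp h.symm)

theorem one_le_sum_cut (hm : IsEulerian m) (hconn : UnderlyingConnected m) {A : Finset V}
    (hA : A.Nonempty) (hA' : A ≠ univ) : 1 ≤ ∑ a ∈ A, ∑ b ∈ Aᶜ, m a b := by
  by_contra! h
  have hout : ∑ a ∈ A, ∑ b ∈ Aᶜ, m a b = 0 := by omega
  have hin : ∑ b ∈ Aᶜ, ∑ a ∈ A, m b a = 0 := hm.sum_cut_eq A ▸ hout
  simp only [sum_eq_zero_iff, mem_compl] at hout hin
  have hclosed : ∀ x y, (1 ≤ m x y ∨ 1 ≤ m y x) → x ∈ A → y ∈ A := by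
    intro x y hxy hx
    by_contra hy
    have := hout x hx y hy
    have := hin y hy x hx
    omega
  obtain ⟨a, ha⟩ := hA
  obtain ⟨b, hb⟩ := by simpa [eq_univ_iff_forall] using hA'
  have hreach : ∀ y, Relation.ReflTransGen (fun x y => 1 ≤ m x y ∨ 1 ≤ m y x) a y → y ∈ A := by
    intro y hy
    induction hy with
    | refl => exact ha
    | tail _ hxy ih => exact hclosed _ _ hxy ih
  exact hb (hreach b (hconn a b))

end IsEulerian

theorem Relation.ReflTransGen.exists_nodup_isChain {α : Type*} {r : α → α → Prop} {a b : α}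
    (h : Relation.ReflTransGen r a b) :
    ∃ l, (a :: l).IsChain r ∧ (a :: l).Nodup ∧ (a :: l).getLast (List.cons_ne_nil _ _) = b := by
  induction h using Relation.ReflTransGen.head_induction_on with
  | refl => exact ⟨[], .singleton _, List.nodup_singleton _, rfl⟩
  | @head a c hac _ ih =>
    obtain ⟨l, hchain, hnodup, hlast⟩ := ih
    by_cases ha : a ∈ c :: l
    · obtain ⟨l₁, l₂, hsplit⟩ := List.append_of_mem ha
      have hsuffix : a :: l₂ <:+ c :: l := ⟨l₁, hsplit.symm⟩
      refine ⟨l₂, hchain.suffix hsuffix, hnodup.sublist hsuffix.sublist, ?_⟩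
      rw [← hlast]
      simp only [hsplit, List.getLast_append_of_ne_nil _ (List.cons_ne_nil _ _)]
    · exact ⟨c :: l, .cons_cons hac hchain, List.nodup_cons.mpr ⟨ha, hnodup⟩, hlast⟩

section Residual

variable {V : Type*} {m : V → V → ℕ} {F : V → V → ℤ}

def WithinCapacity (m : V → V → ℕ) (F : V → V → ℤ) : Prop :=
  ∀ u v, 0 ≤ F u v ∧ F u v ≤ m u v

def ResidualAdj (m : V → V → ℕ) (F : V → V → ℤ) (a b : V) : Prop :=
  F a b < m a b ∨ 0 < F b a

variable [Fintype V] [DecidableEq V]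

theorem WithinCapacity.exists_push (hF : WithinCapacity m F) {a b : V}
    (hab : ResidualAdj m F a b) :
    ∃ F', WithinCapacity m F' ∧ netOut F' = netOut F + (Pi.single a 1 - Pi.single b 1) ∧
      ∀ u v, u ∉ [a, b] ∨ v ∉ [a, b] → F' u v = F u v := by
  have hoff : ∀ u v, u ∉ [a, b] ∨ v ∉ [a, b] → ¬(u = a ∧ v = b) ∧ ¬(u = b ∧ v = a) := by
    simp only [List.mem_cons, List.not_mem_nil, or_false, not_or]
    tauto
  rcases hab with hlt | hpos
  · refine ⟨F + Pi.single a (Pi.single b 1), fun u v => ?_, by rw [map_add, netOut_single_single],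
      fun u v huv => ?_⟩
    · rw [Pi.add_apply, Pi.add_apply, single_single_apply]
      split_ifs with h
      · obtain ⟨rfl, rfl⟩ := h
        exact ⟨by linarith [(hF u v).1], by linarith⟩
      · simpa using hF u v
    · rw [Pi.add_apply, Pi.add_apply, single_single_apply, if_neg (hoff u v huv).1, add_zero]
  · refine ⟨F - Pi.single b (Pi.single a 1), fun u v => ?_, ?_, fun u v huv => ?_⟩
    · rw [Pi.sub_apply, Pi.sub_apply, single_single_apply]
      split_ifs with h
      · obtain ⟨rfl, rfl⟩ := h
        exact ⟨by linarith, by linarith [(hF u v).2]⟩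
      · simpa using hF u v
    · rw [map_sub, netOut_single_single]
      abel
    · rw [Pi.sub_apply, Pi.sub_apply, single_single_apply, if_neg (hoff u v huv).2, sub_zero]

theorem WithinCapacity.exists_augment {s : V} {l : List V} (hF : WithinCapacity m F)
    (hchain : (s :: l).IsChain (ResidualAdj m F)) (hnodup : (s :: l).Nodup) :
    ∃ F', WithinCapacity m F' ∧
      netOut F' = netOut F + (Pi.single s 1 - Pi.single ((s :: l).getLast (List.cons_ne_nil _ _)) 1) ∧
      ∀ u v, u ∉ s :: l ∨ v ∉ s :: l → F' u v = F u v := by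
  induction l generalizing s with
  | nil => exact ⟨F, hF, by simp, fun _ _ _ => rfl⟩
  | cons b l ih =>
    rw [List.isChain_cons_cons] at hchain
    rw [List.nodup_cons] at hnodup
    obtain ⟨F₁, hF₁, hnet₁, hagree₁⟩ := ih hchain.2 hnodup.2
    -- the first arc of the chain is untouched by augmenting along the rest
    have hadj : ResidualAdj m F₁ s b := by
      rw [ResidualAdj, hagree₁ s b (.inl hnodup.1), hagree₁ b s (.inr hnodup.1)]
      exact hchain.1
    obtain ⟨F₂, hF₂, hnet₂, hagree₂⟩ := hF₁.exists_push hadj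
    refine ⟨F₂, hF₂, by rw [hnet₂, hnet₁, List.getLast_cons_cons]; abel, fun u v huv => ?_⟩
    simp only [List.mem_cons, not_or] at huv hagree₁ hagree₂
    rw [hagree₂ u v (by tauto), hagree₁ u v (by tauto)]

theorem WithinCapacity.augment_or_cut (hF : WithinCapacity m F) (s t : V) :
    (∃ F', WithinCapacity m F' ∧ netOut F' = netOut F + (Pi.single s 1 - Pi.single t 1)) ∨
      ∃ A : Finset V, s ∈ A ∧ t ∉ A ∧
        ∑ a ∈ A, ∑ b ∈ Aᶜ, (m a b : ℤ) = ∑ x ∈ A, netOut F x := by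
  classical
  set R := univ.filter (Relation.ReflTransGen (ResidualAdj m F) s)
  by_cases ht : t ∈ R
  · obtain ⟨l, hchain, hnodup, hlast⟩ := (mem_filter.mp ht).2.exists_nodup_isChain
    obtain ⟨F', hF', hnet, -⟩ := hF.exists_augment hchain hnodup
    exact .inl ⟨F', hF', hlast ▸ hnet⟩
  · have hsat : ∀ a ∈ R, ∀ b ∈ Rᶜ, F a b = m a b ∧ F b a = 0 := by
      intro a ha b hb
      have hnadj : ¬ ResidualAdj m F a b := fun hab =>
        mem_compl.mp hb (mem_filter.mpr ⟨mem_univ _, (mem_filter.mp ha).2.tail hab⟩)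
      simp only [ResidualAdj, not_or, not_lt] at hnadj
      exact ⟨le_antisymm (hF a b).2 hnadj.1, le_antisymm hnadj.2 (hF b a).1⟩
    refine .inr ⟨R, mem_filter.mpr ⟨mem_univ _, .refl⟩, ht, ?_⟩
    rw [sum_netOut, sum_eq_zero fun b hb => sum_eq_zero fun a ha => (hsat a ha b hb).2, sub_zero]
    exact sum_congr rfl fun a ha => sum_congr rfl fun b hb => (hsat a ha b hb).1.symm

end Residual

theorem IsEulerian.exists_unit_flow {V : Type*} [Fintype V] [DecidableEq V] {m : V → V → ℕ}
    (hm : IsEulerian m) (hconn : UnderlyingConnected m) (s t : V) :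
    ∃ F, WithinCapacity m F ∧ netOut F = Pi.single s 1 - Pi.single t 1 := by
  have h0 : WithinCapacity m 0 := fun u v => ⟨le_rfl, by simp⟩
  rcases h0.augment_or_cut s t with ⟨F, hF, hnet⟩ | ⟨A, hs, ht, hcut⟩
  · exact ⟨F, hF, by simpa using hnet⟩
  · have hpos := hm.one_le_sum_cut hconn ⟨s, hs⟩ (ne_of_mem_of_not_mem' (mem_univ t) ht).symm
    simp only [map_zero, Pi.zero_apply, sum_const_zero] at hcut
    exact absurd hcut (by exact_mod_cast (Nat.one_le_iff_ne_zero.mp hpos))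

section Paths

variable {V : Type*}

theorem isPath_zero (s : V) : IsPath 0 s s :=
  ⟨0, fun _ => s, fun i j _ => Subsingleton.elim (α := Fin 1) i j, rfl, rfl, Fin.elim0, fun _ _ _ => rfl⟩

theorem IsPath.apply_le_one {p : V → V → ℕ} {s t : V} (hp : IsPath p s t) (u v : V) :
    p u v ≤ 1 := by
  obtain ⟨k, w, -, -, -, harc, hoff⟩ := hp
  by_cases h : ∃ i : Fin k, u = w i.castSucc ∧ v = w i.succ
  · obtain ⟨i, rfl, rfl⟩ := h
    exact (harc i).le
  · exact (hoff u v (not_exists.mp h)).trans_le zero_le_one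

theorem Relation.ReflTransGen.exists_isPath {r : V → V → Prop} {s t : V}
    (h : Relation.ReflTransGen r s t) :
    ∃ p : V → V → ℕ, IsPath p s t ∧ ∀ u v, p u v ≠ 0 → r u v := by
  classical
  obtain ⟨l, hchain, hnodup, hlast⟩ := h.exists_nodup_isChain
  let w : Fin (l.length + 1) → V := fun i => (s :: l)[i]
  have hstep : ∀ i : Fin l.length, r (w i.castSucc) (w i.succ) := fun i =>
    List.isChain_iff_getElem.mp hchain i (by simp)
  refine ⟨fun u v => if ∃ i : Fin l.length, w i.castSucc = u ∧ w i.succ = v then 1 else 0,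
    ⟨l.length, w, fun i j hij => Fin.ext (hnodup.getElem_inj_iff.mp hij), rfl, ?_,
      fun i => if_pos ⟨i, rfl, rfl⟩, fun u v huv => if_neg ?_⟩, fun u v huv => ?_⟩
  · simp [w, ← hlast, List.getLast_eq_getElem]
  · rintro ⟨i, rfl, rfl⟩
    exact huv i ⟨rfl, rfl⟩
  · obtain ⟨i, rfl, rfl⟩ := (ite_ne_right_iff.mp huv).1
    exact hstep i

variable [DecidableEq V]

theorem IsPath.cast_eq_sum {p : V → V → ℕ} {s t : V} (hp : IsPath p s t) :
    ∃ (k : ℕ) (w : Fin (k + 1) → V), w 0 = s ∧ w (Fin.last k) = t ∧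
      (fun u v => (p u v : ℤ)) = ∑ i : Fin k, Pi.single (w i.castSucc) (Pi.single (w i.succ) 1) := by
  obtain ⟨k, w, hw, hs, ht, harc, hoff⟩ := hp
  refine ⟨k, w, hs, ht, ?_⟩
  ext u v
  simp only [Finset.sum_apply, single_single_apply]
  by_cases h : ∃ i : Fin k, u = w i.castSucc ∧ v = w i.succ
  · obtain ⟨i, rfl, rfl⟩ := h
    rw [harc i, sum_eq_single i (fun j _ hji => if_neg fun hj => hji (Fin.castSucc_injective _
      (hw hj.1.symm))) (by simp), if_pos ⟨rfl, rfl⟩, Nat.cast_one]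
  · rw [hoff u v (not_exists.mp h), Nat.cast_zero, sum_eq_zero fun i _ => if_neg (not_exists.mp h i)]

variable [Fintype V]

theorem IsPath.netOut_eq {p : V → V → ℕ} {s t : V} (hp : IsPath p s t) :
    netOut (fun u v => (p u v : ℤ)) = Pi.single s 1 - Pi.single t 1 := by
  obtain ⟨k, w, rfl, rfl, hsum⟩ := hp.cast_eq_sum
  simp only [hsum, map_sum, netOut_single_single]
  exact Fin.sum_castSucc_sub_succ (fun i => Pi.single (w i) 1)

theorem exists_isPath_of_netOut_pos {G : V → V → ℤ} (hG : ∀ u v, 0 ≤ G u v) {s : V}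
    (hs : 0 < netOut G s) :
    ∃ t, netOut G t < 0 ∧ ∃ p : V → V → ℕ, IsPath p s t ∧ ∀ u v, (p u v : ℤ) ≤ G u v := by
  classical
  set R := univ.filter (Relation.ReflTransGen (fun a b => 0 < G a b) s)
  have hsR : s ∈ R := mem_filter.mpr ⟨mem_univ _, .refl⟩
  -- no support leaves `R`, so the net outflow of `R` is `≤ 0` and the surplus at `s` must be
  -- absorbed inside `R`
  obtain ⟨t, htR, ht⟩ : ∃ t ∈ R, netOut G t < 0 := by
    by_contra! hsink
    have hout : ∑ a ∈ R, ∑ b ∈ Rᶜ, G a b = 0 := sum_eq_zero fun a ha => sum_eq_zero fun b hb =>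
      (hG a b).antisymm' (not_lt.mp fun hab =>
        mem_compl.mp hb (mem_filter.mpr ⟨mem_univ _, (mem_filter.mp ha).2.tail hab⟩))
    have hin : 0 ≤ ∑ b ∈ Rᶜ, ∑ a ∈ R, G b a := sum_nonneg fun b _ => sum_nonneg fun a _ => hG b a
    have hpos : 0 < ∑ x ∈ R, netOut G x := sum_pos' hsink ⟨s, hsR, hs⟩
    rw [sum_netOut, hout] at hpos
    linarith
  obtain ⟨p, hp, hsupp⟩ := (mem_filter.mp htR).2.exists_isPath
  refine ⟨t, ht, p, hp, fun u v => ?_⟩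
  rcases Nat.eq_zero_or_pos (p u v) with h | h
  · simpa [h] using hG u v
  · have := hsupp u v h.ne'
    have := hp.apply_le_one u v
    omega

theorem exists_isPath_of_netOut_eq {G : V → V → ℤ} (hG : ∀ u v, 0 ≤ G u v) {s t : V}
    (hnet : netOut G = Pi.single s 1 - Pi.single t 1) :
    ∃ p : V → V → ℕ, IsPath p s t ∧ ∀ u v, (p u v : ℤ) ≤ G u v := by
  by_cases hst : s = t
  · subst hst
    exact ⟨0, isPath_zero s, by simpa using hG⟩
  obtain ⟨t', ht', p, hp, hle⟩ := exists_isPath_of_netOut_pos hG (s := s) (by simp [hnet, hst])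
  obtain rfl : t' = t := by
    by_contra h
    simp only [hnet, Pi.sub_apply, Pi.single_apply, h, if_false, sub_zero] at ht'
    split_ifs at ht' <;> omega
  exact ⟨p, hp, hle⟩

theorem exists_two_isPaths_of_netOut_eq {G : V → V → ℤ} (hG : ∀ u v, 0 ≤ G u v)
    {u₁ u₂ v₁ v₂ : V}
    (hnet : netOut G = Pi.single u₁ 1 - Pi.single v₁ 1 + (Pi.single u₂ 1 - Pi.single v₂ 1)) :
    ∃ p₁ p₂ : V → V → ℕ,
      ((IsPath p₁ u₁ v₁ ∧ IsPath p₂ u₂ v₂) ∨ (IsPath p₁ u₁ v₂ ∧ IsPath p₂ u₂ v₁)) ∧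
      ∀ u v, (p₁ u v : ℤ) + p₂ u v ≤ G u v := by
  by_cases h₁₁ : u₁ = v₁
  · subst h₁₁
    obtain ⟨p₂, hp₂, hle₂⟩ := exists_isPath_of_netOut_eq hG (by simpa using hnet)
    exact ⟨0, p₂, .inl ⟨isPath_zero u₁, hp₂⟩, by simpa using hle₂⟩
  by_cases h₁₂ : u₁ = v₂
  · subst h₁₂
    obtain ⟨p₂, hp₂, hle₂⟩ := exists_isPath_of_netOut_eq hG (s := u₂) (t := v₁)
      (by rw [hnet]; abel)
    exact ⟨0, p₂, .inr ⟨isPath_zero u₁, hp₂⟩, by simpa using hle₂⟩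
  have hpos : 0 < netOut G u₁ := by
    simp only [hnet, Pi.add_apply, Pi.sub_apply, Pi.single_apply, h₁₁, h₁₂, if_true, if_false,
      sub_zero]
    split_ifs <;> omega
  obtain ⟨t₁, ht₁, p₁, hp₁, hle₁⟩ := exists_isPath_of_netOut_pos hG hpos
  have hG' : ∀ u v, 0 ≤ (G - fun u v => (p₁ u v : ℤ)) u v := fun u v => by
    simpa using hle₁ u v
  have hnet' : netOut (G - fun u v => (p₁ u v : ℤ)) =
      Pi.single u₁ 1 - Pi.single v₁ 1 + (Pi.single u₂ 1 - Pi.single v₂ 1)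
        - (Pi.single u₁ 1 - Pi.single t₁ 1) := by
    rw [map_sub, hnet, hp₁.netOut_eq]
  have hsub : ∀ p₂ : V → V → ℕ, (∀ u v, (p₂ u v : ℤ) ≤ (G - fun u v => (p₁ u v : ℤ)) u v) →
      ∀ u v, (p₁ u v : ℤ) + p₂ u v ≤ G u v := fun p₂ h u v => by
    have := h u v
    simp only [Pi.sub_apply] at this
    linarith
  obtain rfl | rfl : t₁ = v₁ ∨ t₁ = v₂ := by
    by_contra! h
    simp only [hnet, Pi.add_apply, Pi.sub_apply, Pi.single_apply, h.1, h.2, if_false, sub_zero]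
      at ht₁
    split_ifs at ht₁ <;> omega
  · obtain ⟨p₂, hp₂, hle₂⟩ := exists_isPath_of_netOut_eq hG' (s := u₂) (t := v₂)
      (by rw [hnet']; abel)
    exact ⟨p₁, p₂, .inl ⟨hp₁, hp₂⟩, hsub p₂ hle₂⟩
  · obtain ⟨p₂, hp₂, hle₂⟩ := exists_isPath_of_netOut_eq hG' (s := u₂) (t := v₁)
      (by rw [hnet']; abel)
    exact ⟨p₁, p₂, .inr ⟨hp₁, hp₂⟩, hsub p₂ hle₂⟩

end Paths

theorem not_strongly2EdgeConnected_two_arc_cut_general {V : Type*} [Fintype V] [DecidableEq V]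
    (m : V → V → ℕ) (hm : IsEulerian m) (hconn : UnderlyingConnected m)
    (hn2 : ¬ Strongly2EdgeConnected m) :
    ∃ A : Finset V, A.Nonempty ∧ A ≠ Finset.univ ∧
      (∑ a ∈ A, ∑ b ∈ Aᶜ, m a b = 1) ∧ (∑ b ∈ Aᶜ, ∑ a ∈ A, m b a = 1) := by
  simp only [Strongly2EdgeConnected, not_forall] at hn2
  obtain ⟨u₁, u₂, v₁, v₂, hno⟩ := hn2
  obtain ⟨F, hF, hnet⟩ := hm.exists_unit_flow hconn u₁ v₁
  rcases hF.augment_or_cut u₂ v₂ with ⟨F₂, hF₂, hnet₂⟩ | ⟨A, hu₂, hv₂, hcut⟩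
  · rw [hnet] at hnet₂
    obtain ⟨p₁, p₂, hpaths, hle⟩ := exists_two_isPaths_of_netOut_eq (fun u v => (hF₂ u v).1) hnet₂
    refine absurd ⟨p₁, p₂, hpaths, fun u v => ?_⟩ hno
    exact_mod_cast (hle u v).trans (hF₂ u v).2
  · have hA : A.Nonempty := ⟨u₂, hu₂⟩
    have hA' : A ≠ univ := (ne_of_mem_of_not_mem' (mem_univ v₂) hv₂).symm
    have hle : ∑ a ∈ A, ∑ b ∈ Aᶜ, m a b ≤ 1 := by
      have : ∑ x ∈ A, netOut F x ≤ 1 := by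
        simp only [hnet, Pi.sub_apply, sum_sub_distrib, sum_pi_single']
        split_ifs <;> norm_num
      exact_mod_cast hcut ▸ this
    have hone := le_antisymm hle (hm.one_le_sum_cut hconn hA hA')
    exact ⟨A, hA, hA', hone, hm.sum_cut_eq A ▸ hone⟩

/-- A finite Eulerian multidigraph with connected underlying
multigraph and at least two vertices which is not strongly 2-edge-connected has a
nonempty proper vertex subset `A` with exactly one arc from `A` to its complement
and exactly one arc from the complement to `A`. -/
theorem not_strongly2EdgeConnected_two_arc_cut {V : Type*} [Fintype V] [DecidableEq V]
    (m : V → V → ℕ) (hm : IsEulerian m) (hconn : UnderlyingConnected m)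
    (hcard : 2 ≤ Fintype.card V) (hn2 : ¬ Strongly2EdgeConnected m) :
    ∃ A : Finset V, A.Nonempty ∧ A ≠ Finset.univ ∧
      (∑ a ∈ A, ∑ b ∈ Aᶜ, m a b = 1) ∧ (∑ b ∈ Aᶜ, ∑ a ∈ A, m b a = 1) :=
  not_strongly2EdgeConnected_two_arc_cut_general m hm hconn hn2
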